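/- For every ordinal α, every connected component of X_α intersects both the bottom line B_u and the top line T_u. -/

import Mathlib

open Set Topology

noncomputable section

/-- A set is an `Fσ` set if it is a countable union of closed sets. -/
def IsFSigma {X : Type*} [TopologicalSpace X] (s : Set X) : Prop :=
  ∃ F : ℕ → Set X, (∀ n, IsClosed (F n)) ∧ s = ⋃ n, F n

/-- A topological space is an `F`-space if any two disjoint open `Fσ` subsets
have disjoint closures. -/
def IsFSpace (X : Type*) [TopologicalSpace X] : Prop :=
  ∀ s t : Set X, IsOpen s → IsOpen t → IsFSigma s → IsFSigma t → Disjoint s t →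
    Disjoint (closure s) (closure t)

/-- `𝐒 = ℕ × [0,1]²` where `ℕ` is discrete and `[0,1]` is the unit interval. -/
abbrev bS : Type := ℕ × (unitInterval × unitInterval)

/-- `βπ : β𝐒 → βℕ`, the Stone–Čech extension of the projection `π(n,x,y) = n`. -/
def betaPi : StoneCech bS → StoneCech ℕ :=
  stoneCechExtend (continuous_stoneCechUnit.comp continuous_fst)

/-- `βf : β𝐒 → [0,1]`, the Stone–Čech extension of `f(n,x,y) = x`. -/
def betaF : StoneCech bS → unitInterval :=
  stoneCechExtend (continuous_fst.comp continuous_snd)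

/-- `S_u = βπ⁻¹(u)`, as a subset of `β𝐒` (carrying the subspace topology). -/
def Su (u : StoneCech ℕ) : Set (StoneCech bS) := betaPi ⁻¹' {u}

/-- `f_u : S_u → [0,1]`, the restriction of `βf` to `S_u`. -/
def fu (u : StoneCech ℕ) : (Su u) → unitInterval := fun z => betaF z.1

/-- `L_t = f_u⁻¹(t) ∩ cl_{S_u} f_u⁻¹([0,t))`. -/
def Lset (u : StoneCech ℕ) (t : unitInterval) : Set (Su u) :=
  fu u ⁻¹' {t} ∩ closure (fu u ⁻¹' (Set.Ico 0 t))

/-- `R_t = f_u⁻¹(t) ∩ cl_{S_u} f_u⁻¹((t,1])`. -/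
def Rset (u : StoneCech ℕ) (t : unitInterval) : Set (Su u) :=
  fu u ⁻¹' {t} ∩ closure (fu u ⁻¹' (Set.Ioc t 1))

/-- The rectangle `P_{s,r} = S_u ∩ cl_{β𝐒}(ℕ × [s,r] × I)`, viewed as a subset of `S_u`. -/
def Pset (u : StoneCech ℕ) (s r : unitInterval) : Set (Su u) :=
  Subtype.val ⁻¹' closure (stoneCechUnit '' {p : bS | p.2.1 ∈ Set.Icc s r})

/-- `L_{s,t} = cl_{S_u}(⋃_{s<r<t} P_{s,r})`. -/
def Lst (u : StoneCech ℕ) (s t : unitInterval) : Set (Su u) :=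
  closure (⋃ r ∈ Set.Ioo s t, Pset u s r)

/-- The interior of `B` in the subspace `A`, viewed as a subset of the ambient space. -/
def relInt {Y : Type*} [TopologicalSpace Y] (A B : Set Y) : Set Y :=
  Subtype.val '' interior ((Subtype.val : A → Y) ⁻¹' B)

/-- The transfinite sequence `X_α ⊆ S_u`: `X_0 = S_u`,
`X_{α+1} = X_α \ ⋃_{t} Int_{X_α}(X_α ∩ f_u⁻¹(t))`, and `X_λ = ⋂_{β<λ} X_β` at limits. -/
def Xseq (u : StoneCech ℕ) : Ordinal → Set (Su u) := fun α =>
  Ordinal.limitRecOn α Set.univ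
    (fun _ Xa => Xa \ ⋃ t : unitInterval, relInt Xa (Xa ∩ fu u ⁻¹' {t}))
    (fun o _ ih => ⋂ (β : {β : Ordinal // β < o}), ih β.1 β.2)

/-- The bottom line `B_u = S_u ∩ cl_{β𝐒}(ℕ × I × {0})`, viewed as a subset of `S_u`. -/
def Bu (u : StoneCech ℕ) : Set (Su u) :=
  Subtype.val ⁻¹' closure (stoneCechUnit '' {p : bS | p.2.2 = 0})

/-- The top line `T_u = S_u ∩ cl_{β𝐒}(ℕ × I × {1})`, viewed as a subset of `S_u`. -/
def Tu (u : StoneCech ℕ) : Set (Su u) :=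
  Subtype.val ⁻¹' closure (stoneCechUnit '' {p : bS | p.2.2 = 1})

/-!
For a closed set `E` (either line), induction on `α` shows that for every real interval
`J = (c, d)` each component of `X_α ∩ cl f⁻¹(J)` meets `E`; taking `J ⊇ [0, 1]` gives the theorem.

For `α = 0` the strip `cl f⁻¹(J)` is connected and meets `E`: any two points of `f⁻¹(J)` lie in a
connected rectangle `P_{s,r} ⊆ f⁻¹(J)`, and every rectangle meets both lines. Otherwise a
component of `x` missing `E` is separated from `E` by disjoint open sets `V ∋ x` and `W ⊇ E`
covering `X_α ∩ cl f⁻¹(J)`. At a limit, compactness puts some earlier `X_β ∩ cl f⁻¹(J)` inside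
`V ∪ W`, contradicting the induction hypothesis. At `α + 1`, the compact set of points of
`X_α ∩ cl f⁻¹(J)` outside `V ∪ W` is covered by the relative interiors of the level sets of
`X_α`, hence lies on finitely many levels `T`. No point of `V ∩ X_α` lies on a level in `J ∖ T`:
on a thin strip around that level avoiding `T`, the induction hypothesis would connect it to
`E ⊆ W` inside `V ∪ W`. As `x` is not interior to its level in `X_α` and the other levels in
`T ∪ {c, d}` form a closed set, `x` is then a limit of points of `f⁻¹(-∞, c)` or of
`f⁻¹(d, ∞)`, which is impossible in an F-space since these open `Fσ` sets are disjoint from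
`f⁻¹(J)`.
-/

section

variable {X : Type*} [TopologicalSpace X]

lemma IsOpen.isFSigma {Y : Type*} [TopologicalSpace Y] [PerfectlyNormalSpace Y] {U : Set Y}
    (hU : IsOpen U) : IsFSigma U := by
  obtain ⟨G, hG, hUG⟩ := isGδ_iff_eq_iInter_nat.mp hU.isClosed_compl.isGδ
  refine ⟨fun n => (G n)ᶜ, fun n => (hG n).isClosed_compl, ?_⟩
  rw [← compl_iInter, ← hUG, compl_compl]

lemma IsFSigma.preimage {Y : Type*} [TopologicalSpace Y] {f : X → Y} (hf : Continuous f)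
    {s : Set Y} (hs : IsFSigma s) : IsFSigma (f ⁻¹' s) := by
  obtain ⟨F, hF, rfl⟩ := hs
  exact ⟨fun n => f ⁻¹' F n, fun n => (hF n).preimage hf, preimage_iUnion⟩

lemma IsFSpace.disjoint_closure_preimage {Y : Type*} [TopologicalSpace Y] [PerfectlyNormalSpace Y]
    (hX : IsFSpace X) {f : X → Y} (hf : Continuous f) {U V : Set Y} (hU : IsOpen U)
    (hV : IsOpen V) (hUV : Disjoint U V) :
    Disjoint (closure (f ⁻¹' U)) (closure (f ⁻¹' V)) :=
  hX _ _ (hU.preimage hf) (hV.preimage hf) (hU.isFSigma.preimage hf) (hV.isFSigma.preimage hf)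
    (hUV.preimage f)

lemma preimage_val_relInt (A B : Set X) :
    ((↑) : A → X) ⁻¹' relInt A B = interior ((↑) ⁻¹' B) :=
  Subtype.val_injective.preimage_image _

lemma relInt_subset (A B : Set X) : relInt A B ⊆ A :=
  Subtype.coe_image_subset _ _

lemma mem_closure_diff_of_notMem_relInt {A B : Set X} {x : X} (hx : x ∈ A)
    (hxB : x ∉ relInt A B) : x ∈ closure (A \ B) := by
  have hx' : (⟨x, hx⟩ : A) ∈ closure ((↑) ⁻¹' B)ᶜ := by
    rw [closure_compl, ← preimage_val_relInt]
    exact hxB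
  refine closure_mono ?_ (image_closure_subset_closure_image continuous_subtype_val ⟨_, hx', rfl⟩)
  rintro _ ⟨z, hz, rfl⟩
  exact ⟨z.2, hz⟩

lemma relInt_subset_right (A B : Set X) : relInt A B ⊆ B := by
  rintro _ ⟨w, hw, rfl⟩
  exact interior_subset (s := ((↑) : A → X) ⁻¹' B) hw

lemma iUnion_relInt_fiber {Y : Type*} (f : X → Y) (A : Set X) :
    ⋃ t, relInt A (A ∩ f ⁻¹' {t}) = {x | x ∈ relInt A (A ∩ f ⁻¹' {f x})} := by
  ext x
  refine ⟨fun hx => ?_, fun hx => mem_iUnion.mpr ⟨f x, hx⟩⟩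
  obtain ⟨t, ht⟩ := mem_iUnion.mp hx
  show x ∈ relInt A (A ∩ f ⁻¹' {f x})
  rwa [(relInt_subset_right _ _ ht).2]

lemma IsClosed.sdiff_iUnion_relInt {A : Set X} (hA : IsClosed A) {ι : Type*} (B : ι → Set X) :
    IsClosed (A \ ⋃ i, relInt A (B i)) := by
  simp only [relInt]
  rw [← image_iUnion, ← image_val_compl]
  exact hA.isClosedEmbedding_subtypeVal.isClosedMap _
    (isOpen_iUnion fun _ => isOpen_interior).isClosed_compl

lemma finite_image_of_subset_iUnion_relInt {Z : Type*} (f : X → Z) {Y D : Set X}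
    (hD : IsCompact D) (hDY : D ⊆ ⋃ t, relInt Y (Y ∩ f ⁻¹' {t})) : (f '' D).Finite := by
  have hDY' : D ⊆ Y := hDY.trans (iUnion_subset fun _ => relInt_subset _ _)
  have hD' : IsCompact (((↑) : Y → X) ⁻¹' D) := by
    rwa [Subtype.isCompact_iff, image_preimage_eq_of_subset (hDY'.trans Subtype.range_coe.superset)]
  obtain ⟨T, hT⟩ := hD'.elim_finite_subcover (fun t => interior ((↑) ⁻¹' (Y ∩ f ⁻¹' {t})))
    (fun _ => isOpen_interior) fun z hz => by
      obtain ⟨t, ht⟩ := mem_iUnion.mp (hDY hz)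
      exact mem_iUnion.mpr ⟨t, by rwa [← preimage_val_relInt]⟩
  refine T.finite_toSet.subset ?_
  rintro _ ⟨z, hz, rfl⟩
  obtain ⟨t, ht, hzt⟩ := mem_iUnion₂.mp (hT (show (⟨z, hDY' hz⟩ : Y) ∈ (↑) ⁻¹' D from hz))
  rwa [(interior_subset hzt).2]

lemma exists_isClopen_mem_disjoint_of_disjoint_connectedComponent [CompactSpace X] [T2Space X]
    {E : Set X} (hE : IsClosed E) {x : X} (h : Disjoint (connectedComponent x) E) :
    ∃ K, IsClopen K ∧ x ∈ K ∧ Disjoint K E := by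
  rw [connectedComponent_eq_iInter_isClopen, disjoint_iff_inter_eq_empty, inter_comm] at h
  obtain ⟨T, hT⟩ := hE.isCompact.elim_finite_subfamily_closed _ (fun K => K.2.1.1) h
  refine ⟨⋂ K ∈ T, K.1, isClopen_biInter_finset fun K _ => K.2.1,
    mem_iInter₂.mpr fun K _ => K.2.2, ?_⟩
  rwa [disjoint_iff_inter_eq_empty, inter_comm]

lemma exists_isOpen_separation_of_disjoint_connectedComponentIn [CompactSpace X] [T2Space X]
    {A E : Set X} (hA : IsClosed A) (hE : IsClosed E) {x : X} (hx : x ∈ A)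
    (h : Disjoint (connectedComponentIn A x) E) :
    ∃ V W, IsOpen V ∧ IsOpen W ∧ Disjoint V W ∧ x ∈ V ∧ E ⊆ W ∧ A ⊆ V ∪ W := by
  have : CompactSpace A := isCompact_iff_compactSpace.mp hA.isCompact
  rw [connectedComponentIn_eq_image hx, disjoint_image_left] at h
  obtain ⟨K, hK, hxK, hKE⟩ := exists_isClopen_mem_disjoint_of_disjoint_connectedComponent
    (hE.preimage continuous_subtype_val) h
  have hKc : IsCompact (((↑) : A → X) '' K) := hK.isClosed.isCompact.image continuous_subtype_val
  have hKc' : IsCompact (((↑) : A → X) '' Kᶜ) :=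
    hK.compl.isClosed.isCompact.image continuous_subtype_val
  obtain ⟨V, W, hV, hW, hKV, hKEW, hVW⟩ := SeparatedNhds.of_isCompact_isCompact hKc
    (hKc'.union hE.isCompact) (disjoint_union_right.mpr
      ⟨(disjoint_image_iff Subtype.val_injective).mpr disjoint_compl_right,
        disjoint_image_left.mpr hKE⟩)
  refine ⟨V, W, hV, hW, hVW, hKV ⟨_, hxK, rfl⟩, subset_union_right.trans hKEW, fun z hz => ?_⟩
  by_cases hzK : (⟨z, hz⟩ : A) ∈ K
  · exact Or.inl (hKV ⟨_, hzK, rfl⟩)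
  · exact Or.inr (hKEW (Or.inl ⟨_, hzK, rfl⟩))

def ComponentsMeet (A E : Set X) : Prop :=
  ∀ x ∈ A, (connectedComponentIn A x ∩ E).Nonempty

lemma IsPreconnected.componentsMeet {A E : Set X} (hA : IsPreconnected A)
    (hAE : (A ∩ E).Nonempty) : ComponentsMeet A E := fun _ hx =>
  hAE.mono (inter_subset_inter_left E (hA.subset_connectedComponentIn hx subset_rfl))

lemma ComponentsMeet.iInter [CompactSpace X] [T2Space X] {ι : Type*} [Nonempty ι]
    {A : ι → Set X} {E : Set X} (hd : Directed (· ⊇ ·) A) (hA : ∀ i, IsClosed (A i))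
    (hE : IsClosed E) (h : ∀ i, ComponentsMeet (A i) E) : ComponentsMeet (⋂ i, A i) E := by
  intro x hx
  by_contra hcon
  obtain ⟨V, W, hV, hW, hVW, hxV, hEW, hAVW⟩ :=
    exists_isOpen_separation_of_disjoint_connectedComponentIn (isClosed_iInter hA) hE hx
      (not_nonempty_iff_eq_empty.mp hcon |> disjoint_iff_inter_eq_empty.mpr)
  obtain ⟨i, hi⟩ := exists_subset_nhds_of_isCompact' hd (fun i => (hA i).isCompact) hA
    fun z hz => (hV.union hW).mem_nhds (hAVW hz)
  have hxi : x ∈ A i := mem_iInter.mp hx i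
  obtain ⟨y, hyC, hyE⟩ := h i x hxi
  have hCV : connectedComponentIn (A i) x ⊆ V :=
    isPreconnected_connectedComponentIn.subset_left_of_subset_union hV hW hVW
      ((connectedComponentIn_subset _ _).trans hi) ⟨x, mem_connectedComponentIn hxi, hxV⟩
  exact hVW.ne_of_mem (hCV hyC) (hEW hyE) rfl

def levelDerived {Y : Type*} (f : X → Y) (α : Ordinal) : Set X :=
  Ordinal.limitRecOn α Set.univ
    (fun _ Xa => Xa \ ⋃ t : Y, relInt Xa (Xa ∩ f ⁻¹' {t}))
    (fun o _ ih => ⋂ (β : {β : Ordinal // β < o}), ih β.1 β.2)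

section levelDerived

variable {Y : Type*} (f : X → Y)

@[simp]
lemma levelDerived_zero : levelDerived f 0 = univ :=
  Ordinal.limitRecOn_zero ..

lemma levelDerived_add_one (α : Ordinal) :
    levelDerived f (α + 1) =
      levelDerived f α \ ⋃ t, relInt (levelDerived f α) (levelDerived f α ∩ f ⁻¹' {t}) :=
  Ordinal.limitRecOn_add_one ..

lemma levelDerived_limit {α : Ordinal} (hα : Order.IsSuccLimit α) :
    levelDerived f α = ⋂ β : {β : Ordinal // β < α}, levelDerived f β :=
  Ordinal.limitRecOn_limit _ _ _ _ hα

lemma levelDerived_antitone : Antitone (levelDerived f) := by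
  intro β α hβα
  induction α using Ordinal.limitRecOn with
  | zero => rw [nonpos_iff_eq_zero.mp hβα]
  | add_one γ ih =>
    rcases (Order.le_succ_iff_eq_or_le.mp hβα) with rfl | hβγ
    · rfl
    · rw [levelDerived_add_one]
      exact sdiff_subset.trans (ih hβγ)
  | limit α hα _ =>
    rcases hβα.eq_or_lt with rfl | hβα
    · rfl
    · rw [levelDerived_limit f hα]
      exact iInter_subset_of_subset ⟨β, hβα⟩ subset_rfl

lemma isClosed_levelDerived (α : Ordinal) : IsClosed (levelDerived f α) := by
  induction α using Ordinal.limitRecOn with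
  | zero => simp
  | add_one γ ih =>
    rw [levelDerived_add_one]
    exact ih.sdiff_iUnion_relInt _
  | limit α hα ih =>
    rw [levelDerived_limit f hα]
    exact isClosed_iInter fun β => ih β.1 β.2

end levelDerived

lemma levelDerived_comp {Y Z : Type*} (f : X → Y) {g : Y → Z} (hg : Function.Injective g) :
    levelDerived (g ∘ f) = levelDerived f := by
  have hfiber : ∀ A : Set X,
      ⋃ s, relInt A (A ∩ (g ∘ f) ⁻¹' {s}) = ⋃ t, relInt A (A ∩ f ⁻¹' {t}) := by
    intro A
    have : ∀ x, (g ∘ f) ⁻¹' {(g ∘ f) x} = f ⁻¹' {f x} := fun x => by ext; simp [hg.eq_iff]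
    simp only [iUnion_relInt_fiber, this]
  funext α
  simp only [levelDerived, hfiber]

section Induction

variable {f : X → ℝ} {E : Set X}

lemma closure_preimage_Ioo_subset (hf : Continuous f) (c d : ℝ) :
    closure (f ⁻¹' Ioo c d) ⊆ f ⁻¹' Icc c d :=
  closure_minimal (preimage_mono Ioo_subset_Icc_self) (isClosed_Icc.preimage hf)

lemma IsFSpace.notMem_closure_diff_fiber (hX : IsFSpace X) (hf : Continuous f) {c d : ℝ}
    {T : Set ℝ} (hT : T.Finite) {s : Set X} (hs : s ⊆ f ⁻¹' (T ∪ (Ioo c d)ᶜ)) {x : X}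
    (hx : x ∈ closure (f ⁻¹' Ioo c d)) : x ∉ closure (s \ f ⁻¹' {f x}) := by
  have hsub : s \ f ⁻¹' {f x} ⊆
      f ⁻¹' (insert c (insert d T) \ {f x}) ∪ (f ⁻¹' Iio c ∪ f ⁻¹' Ioi d) := by
    rintro z ⟨hzs, hzx⟩
    rcases hs hzs with hzT | hzcd
    · exact Or.inl ⟨mem_insert_of_mem _ (mem_insert_of_mem _ hzT), hzx⟩
    rw [mem_compl_iff, mem_Ioo, not_and_or, not_lt, not_lt] at hzcd
    rcases hzcd with hzc | hzd
    · rcases hzc.lt_or_eq with hzc | hzc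
      · exact Or.inr (Or.inl hzc)
      · exact Or.inl ⟨hzc ▸ mem_insert _ _, hzx⟩
    · rcases hzd.lt_or_eq with hzd | hzd
      · exact Or.inr (Or.inr hzd)
      · exact Or.inl ⟨hzd ▸ mem_insert_of_mem _ (mem_insert _ _), hzx⟩
  intro hxs
  have hxs' := closure_mono hsub hxs
  rw [closure_union, closure_union] at hxs'
  rcases hxs' with hxT | hxc | hxd
  · have hclosed : IsClosed (f ⁻¹' (insert c (insert d T) \ {f x})) :=
      ((hT.insert d).insert c).sdiff.isClosed.preimage hf
    exact (hclosed.closure_subset hxT).2 rfl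
  · exact (hX.disjoint_closure_preimage hf isOpen_Iio isOpen_Ioo
      (Ioi_disjoint_Iio_same.symm.mono_right Ioo_subset_Ioi_self)).ne_of_mem hxc hx rfl
  · exact (hX.disjoint_closure_preimage hf isOpen_Ioi isOpen_Ioo
      (Ioi_disjoint_Iio_same.mono_right Ioo_subset_Iio_self)).ne_of_mem hxd hx rfl

lemma preimage_Ioo_inter_subset_of_separated (hf : Continuous f) {Y : Set X}
    (hY : ∀ c d, ComponentsMeet (Y ∩ closure (f ⁻¹' Ioo c d)) E) {V W : Set X} (hV : IsOpen V)
    (hW : IsOpen W) (hVW : Disjoint V W) (hEW : E ⊆ W) {T : Set ℝ} (hT : T.Finite) {c d : ℝ}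
    (hcover : Y ∩ closure (f ⁻¹' Ioo c d) ⊆ V ∪ W ∪ f ⁻¹' T) :
    V ∩ Y ∩ f ⁻¹' Ioo c d ⊆ f ⁻¹' T := by
  rintro z ⟨⟨hzV, hzY⟩, hzcd⟩
  by_contra hzT
  obtain ⟨δ, hδ, hball⟩ := Metric.nhds_basis_closedBall.mem_iff.mp
    ((isOpen_Ioo.sdiff hT.isClosed).mem_nhds ⟨hzcd, hzT⟩)
  rw [Real.closedBall_eq_Icc] at hball
  have hzδ : z ∈ Y ∩ closure (f ⁻¹' Ioo (f z - δ) (f z + δ)) :=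
    ⟨hzY, subset_closure ⟨by linarith, by linarith⟩⟩
  obtain ⟨y, hyC, hyE⟩ := hY _ _ z hzδ
  have hCVW : connectedComponentIn (Y ∩ closure (f ⁻¹' Ioo (f z - δ) (f z + δ))) z ⊆ V ∪ W := by
    intro w hw
    obtain ⟨hwY, hwδ⟩ := connectedComponentIn_subset _ _ hw
    have hlevel := hball (closure_preimage_Ioo_subset hf _ _ hwδ)
    have hwcd : w ∈ closure (f ⁻¹' Ioo c d) :=
      closure_mono (preimage_mono (Ioo_subset_Icc_self.trans (hball.trans sdiff_subset))) hwδ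
    exact (hcover ⟨hwY, hwcd⟩).resolve_right hlevel.2
  have hCV := isPreconnected_connectedComponentIn.subset_left_of_subset_union hV hW hVW hCVW
    ⟨z, mem_connectedComponentIn hzδ, hzV⟩
  exact hVW.ne_of_mem (hCV hyC) (hEW hyE) rfl

lemma ComponentsMeet.sdiff_iUnion_relInt [CompactSpace X] [T2Space X] (hX : IsFSpace X)
    (hf : Continuous f) (hE : IsClosed E) {Y : Set X} (hYc : IsClosed Y)
    (hY : ∀ c d, ComponentsMeet (Y ∩ closure (f ⁻¹' Ioo c d)) E) (c d : ℝ) :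
    ComponentsMeet ((Y \ ⋃ t, relInt Y (Y ∩ f ⁻¹' {t})) ∩ closure (f ⁻¹' Ioo c d)) E := by
  rintro x ⟨⟨hxY, hxrel⟩, hxS⟩
  by_contra hcon
  obtain ⟨V, W, hV, hW, hVW, hxV, hEW, hAVW⟩ :=
    exists_isOpen_separation_of_disjoint_connectedComponentIn
      ((hYc.sdiff_iUnion_relInt _).inter isClosed_closure) hE ⟨⟨hxY, hxrel⟩, hxS⟩
      (disjoint_iff_inter_eq_empty.mpr (not_nonempty_iff_eq_empty.mp hcon))
  set D := (Y ∩ closure (f ⁻¹' Ioo c d)) \ (V ∪ W)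
  have hDrel : D ⊆ ⋃ t, relInt Y (Y ∩ f ⁻¹' {t}) := fun z hz => by
    by_contra hzrel
    exact hz.2 (hAVW ⟨⟨hz.1.1, hzrel⟩, hz.1.2⟩)
  have hDc : IsCompact D :=
    ((hYc.inter isClosed_closure).sdiff (hV.union hW)).isCompact
  have hcover : Y ∩ closure (f ⁻¹' Ioo c d) ⊆ V ∪ W ∪ f ⁻¹' (f '' D) := fun z hz => by
    by_cases hzVW : z ∈ V ∪ W
    · exact Or.inl hzVW
    · exact Or.inr ⟨z, ⟨hz, hzVW⟩, rfl⟩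
  have hT := finite_image_of_subset_iUnion_relInt f hDc hDrel
  have hlevels := preimage_Ioo_inter_subset_of_separated hf hY hV hW hVW hEW hT hcover
  refine hX.notMem_closure_diff_fiber hf hT (s := V ∩ Y) (fun z hz => ?_) hxS ?_
  · by_cases hzcd : f z ∈ Ioo c d
    · exact Or.inl (hlevels ⟨hz, hzcd⟩)
    · exact Or.inr hzcd
  · have hx := mem_closure_diff_of_notMem_relInt hxY fun h => hxrel (mem_iUnion.mpr ⟨f x, h⟩)
    rw [sdiff_self_inter] at hx
    rw [inter_sdiff_assoc]
    exact hV.inter_closure ⟨hxV, hx⟩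

variable [CompactSpace X] [T2Space X]

theorem componentsMeet_levelDerived_inter_closure (hX : IsFSpace X) (hf : Continuous f)
    (hE : IsClosed E) (hconn : ∀ c d, IsPreconnected (f ⁻¹' Ioo c d))
    (hmeet : ∀ c d, (f ⁻¹' Ioo c d).Nonempty → (f ⁻¹' Ioo c d ∩ E).Nonempty)
    (α : Ordinal) (c d : ℝ) :
    ComponentsMeet (levelDerived f α ∩ closure (f ⁻¹' Ioo c d)) E := by
  induction α using Ordinal.limitRecOn generalizing c d with
  | zero =>
    rw [levelDerived_zero, univ_inter]
    intro x hx
    exact (hconn c d).closure.componentsMeet ((hmeet c d (closure_nonempty_iff.mp ⟨x, hx⟩)).mono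
      (inter_subset_inter_left _ subset_closure)) x hx
  | add_one γ ih =>
    rw [levelDerived_add_one]
    exact ComponentsMeet.sdiff_iUnion_relInt hX hf hE (isClosed_levelDerived f γ) ih c d
  | limit α hα ih =>
    have : Nonempty {β // β < α} := ⟨⟨0, hα.bot_lt⟩⟩
    rw [levelDerived_limit f hα, iInter_inter]
    exact ComponentsMeet.iInter
      (Antitone.directed_ge fun β β' hβ => inter_subset_inter_left _ (levelDerived_antitone f hβ))
      (fun β => (isClosed_levelDerived f β).inter isClosed_closure) hE fun β => ih β.1 β.2 c d

theorem componentsMeet_levelDerived (hX : IsFSpace X) (hf : Continuous f) (hE : IsClosed E)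
    (hconn : ∀ c d, IsPreconnected (f ⁻¹' Ioo c d))
    (hmeet : ∀ c d, (f ⁻¹' Ioo c d).Nonempty → (f ⁻¹' Ioo c d ∩ E).Nonempty) (α : Ordinal) :
    ComponentsMeet (levelDerived f α) E := by
  obtain ⟨r, hr⟩ := (isCompact_range hf).isBounded.subset_closedBall 0
  have hbound : f ⁻¹' Ioo (-r - 1) (r + 1) = univ := by
    refine eq_univ_of_forall fun x => ?_
    have hx := hr (mem_range_self x)
    rw [Real.closedBall_eq_Icc, zero_sub, zero_add] at hx
    exact ⟨by linarith [hx.1], by linarith [hx.2]⟩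
  simpa [hbound] using
    componentsMeet_levelDerived_inter_closure hX hf hE hconn hmeet α (-r - 1) (r + 1)

end Induction

end

lemma unitInterval.exists_gt_and_lt_or_eq_zero {c : ℝ} {l : unitInterval} (h : c < l) :
    ∃ a : unitInterval, c < a ∧ (a < l ∨ a = 0) := by
  by_cases hc : c < 0
  · exact ⟨0, hc, Or.inr rfl⟩
  · refine ⟨⟨(c + l) / 2, by linarith, by linarith [l.2.2]⟩, by simp only; linarith,
      Or.inl (show (c + l) / 2 < (l : ℝ) by linarith)⟩

lemma unitInterval.exists_lt_and_gt_or_eq_one {d : ℝ} {r : unitInterval} (h : (r : ℝ) < d) :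
    ∃ b : unitInterval, (b : ℝ) < d ∧ (r < b ∨ b = 1) := by
  by_cases hd : 1 < d
  · exact ⟨1, hd, Or.inr rfl⟩
  · refine ⟨⟨(r + d) / 2, by linarith [r.2.1], by linarith⟩, by simp only; linarith,
      Or.inl (show (r : ℝ) < (r + d) / 2 by linarith)⟩

section StoneCech

variable (u : StoneCech ℕ)

lemma betaF_stoneCechUnit (p : bS) : betaF (stoneCechUnit p) = p.2.1 :=
  congrFun (stoneCechExtend_extends _) p

lemma betaPi_stoneCechUnit (p : bS) : betaPi (stoneCechUnit p) = stoneCechUnit p.1 :=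
  congrFun (stoneCechExtend_extends _) p

lemma isClosed_Su : IsClosed (Su u) :=
  isClosed_singleton.preimage (continuous_stoneCechExtend _)

lemma continuous_fu : Continuous (fu u) :=
  (continuous_stoneCechExtend _).comp continuous_subtype_val

lemma betaF_mem_of_mem_closure {A : Set bS} {T : Set unitInterval} (hT : IsClosed T)
    (hA : ∀ p ∈ A, p.2.1 ∈ T) {z : StoneCech bS} (hz : z ∈ closure (stoneCechUnit '' A)) :
    betaF z ∈ T := by
  refine hT.closure_subset (map_mem_closure (continuous_stoneCechExtend _) hz ?_)
  rintro _ ⟨p, hp, rfl⟩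
  rw [betaF_stoneCechUnit]
  exact hA p hp

lemma fu_mem_Icc_of_mem_Pset {a b : unitInterval} {z : Su u} (hz : z ∈ Pset u a b) :
    fu u z ∈ Icc a b :=
  betaF_mem_of_mem_closure isClosed_Icc (fun _ hp => hp) hz

-- A point on the level `a > 0` may be a limit of points of `𝐒` strictly left of `a` only.
lemma mem_Pset_of_lt {a b : unitInterval} {z : Su u} (ha : a < fu u z ∨ a = 0)
    (hb : fu u z < b ∨ b = 1) : z ∈ Pset u a b := by
  have hcover : {p : bS | p.2.1 ≤ a} ∪ {p | p.2.1 ∈ Icc a b} ∪ {p | b ≤ p.2.1} = univ := by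
    refine eq_univ_of_forall fun p => ?_
    by_cases hpa : p.2.1 ≤ a
    · exact Or.inl (Or.inl hpa)
    by_cases hpb : b ≤ p.2.1
    · exact Or.inr hpb
    exact Or.inl (Or.inr ⟨(not_le.mp hpa).le, (not_le.mp hpb).le⟩)
  have hz : z.1 ∈ closure (stoneCechUnit '' {p : bS | p.2.1 ≤ a}) ∪
      closure (stoneCechUnit '' {p | p.2.1 ∈ Icc a b}) ∪
      closure (stoneCechUnit '' {p | b ≤ p.2.1}) := by
    rw [← closure_union, ← closure_union, ← image_union, ← image_union, hcover, image_univ,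
      denseRange_stoneCechUnit.closure_range]
    trivial
  rcases hz with (hz | hz) | hz
  · rcases ha with ha | rfl
    · exact absurd (betaF_mem_of_mem_closure isClosed_Iic (fun _ hp => hp) hz) ha.not_ge
    · exact closure_mono (image_mono (t := {p : bS | p.2.1 ∈ Icc 0 b})
        fun p hp => ⟨unitInterval.nonneg _, hp.trans (unitInterval.nonneg _)⟩) hz
  · exact hz
  · rcases hb with hb | rfl
    · exact absurd (betaF_mem_of_mem_closure isClosed_Ici (fun _ hp => hp) hz) hb.not_ge
    · exact closure_mono (image_mono (t := {p : bS | p.2.1 ∈ Icc a 1})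
        fun p hp => ⟨(unitInterval.le_one _).trans hp, unitInterval.le_one _⟩) hz

lemma exists_mem_closure_of_forall_fst {A : Set bS} (hA : ∀ n : ℕ, ∃ p ∈ A, p.1 = n) :
    ∃ z : Su u, z.1 ∈ closure (stoneCechUnit '' A) := by
  have hcl : IsClosed (betaPi '' closure (stoneCechUnit '' A)) :=
    (isClosed_closure.isCompact.image (continuous_stoneCechExtend _)).isClosed
  have hrange : range stoneCechUnit ⊆ betaPi '' closure (stoneCechUnit '' A) := by
    rintro _ ⟨n, rfl⟩
    obtain ⟨p, hp, rfl⟩ := hA n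
    exact ⟨stoneCechUnit p, subset_closure (mem_image_of_mem _ hp), betaPi_stoneCechUnit p⟩
  obtain ⟨z, hz, hzu⟩ := hcl.closure_subset_iff.mpr hrange (denseRange_stoneCechUnit u)
  exact ⟨⟨z, hzu⟩, hz⟩

lemma Pset_inter_line_nonempty {a b : unitInterval} (hab : a ≤ b) (y : unitInterval) :
    (Pset u a b ∩ Subtype.val ⁻¹' closure (stoneCechUnit '' {p : bS | p.2.2 = y})).Nonempty := by
  obtain ⟨z, hz⟩ := exists_mem_closure_of_forall_fst u (A := {p : bS | p.2.1 ∈ Icc a b ∧ p.2.2 = y})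
    fun n => ⟨(n, a, y), ⟨⟨le_rfl, hab⟩, rfl⟩, rfl⟩
  exact ⟨z, closure_mono (image_mono fun _ hp => hp.1) hz,
    closure_mono (image_mono fun _ hp => hp.2) hz⟩

lemma exists_Pset_mem_subset_preimage_Ioo {c d : ℝ} {x y : Su u}
    (hx : (fu u x : ℝ) ∈ Ioo c d) (hy : (fu u y : ℝ) ∈ Ioo c d) :
    ∃ a b, a < b ∧ x ∈ Pset u a b ∧ y ∈ Pset u a b ∧
      Pset u a b ⊆ (fun z => (fu u z : ℝ)) ⁻¹' Ioo c d := by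
  obtain ⟨a, hca, ha⟩ := unitInterval.exists_gt_and_lt_or_eq_zero
    (l := min (fu u x) (fu u y)) (lt_min hx.1 hy.1)
  obtain ⟨b, hbd, hb⟩ := unitInterval.exists_lt_and_gt_or_eq_one
    (r := max (fu u x) (fu u y)) (max_lt hx.2 hy.2)
  have hmin := min_le_max (a := fu u x) (b := fu u y)
  refine ⟨a, b, ?_, mem_Pset_of_lt u ?_ ?_, mem_Pset_of_lt u ?_ ?_, fun z hz => ?_⟩
  · rcases ha with ha | rfl <;> rcases hb with hb | rfl
    · exact (ha.trans_le hmin).trans hb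
    · exact ha.trans_le (hmin.trans (unitInterval.le_one _))
    · exact (unitInterval.nonneg _).trans_lt hb
    · exact zero_lt_one
  · exact ha.imp_left fun h => h.trans_le (min_le_left _ _)
  · exact hb.imp_left (le_max_left _ _).trans_lt
  · exact ha.imp_left fun h => h.trans_le (min_le_right _ _)
  · exact hb.imp_left (le_max_right _ _).trans_lt
  · have hzab := fu_mem_Icc_of_mem_Pset u hz
    exact ⟨hca.trans_le hzab.1, (show (fu u z : ℝ) ≤ b from hzab.2).trans_lt hbd⟩

lemma isPreconnected_preimage_Ioo (hP : ∀ s r : unitInterval, s < r → IsConnected (Pset u s r))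
    (c d : ℝ) : IsPreconnected ((fun z => (fu u z : ℝ)) ⁻¹' Ioo c d) :=
  isPreconnected_of_forall_pair fun _ hx _ hy => by
    obtain ⟨a, b, hab, hxP, hyP, hPsub⟩ := exists_Pset_mem_subset_preimage_Ioo u hx hy
    exact ⟨_, hPsub, hxP, hyP, (hP a b hab).isPreconnected⟩

lemma preimage_Ioo_inter_line_nonempty (y : unitInterval) (c d : ℝ)
    (h : ((fun z => (fu u z : ℝ)) ⁻¹' Ioo c d).Nonempty) :
    ((fun z => (fu u z : ℝ)) ⁻¹' Ioo c d ∩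
      Subtype.val ⁻¹' closure (stoneCechUnit '' {p : bS | p.2.2 = y})).Nonempty := by
  obtain ⟨x, hx⟩ := h
  obtain ⟨a, b, hab, -, -, hPsub⟩ := exists_Pset_mem_subset_preimage_Ioo u hx hx
  exact (Pset_inter_line_nonempty u hab.le y).mono (inter_subset_inter_left _ hPsub)

end StoneCech

theorem components_meet_bottom_top_general (u : StoneCech ℕ)
    (hFsp : IsFSpace (Su u))
    (hP : ∀ s r : unitInterval, s < r → IsConnected (Pset u s r)) :
    ∀ α : Ordinal, ∀ x ∈ Xseq u α,
      (connectedComponentIn (Xseq u α) x ∩ Bu u).Nonempty ∧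
      (connectedComponentIn (Xseq u α) x ∩ Tu u).Nonempty := by
  intro α x hx
  have : CompactSpace (Su u) := isCompact_iff_compactSpace.mp (isClosed_Su u).isCompact
  have hf : Continuous fun z => (fu u z : ℝ) := continuous_subtype_val.comp (continuous_fu u)
  -- `Xseq u` is `levelDerived (fu u)` by definition.
  have hXseq : Xseq u = levelDerived fun z => (fu u z : ℝ) :=
    (levelDerived_comp (fu u) Subtype.val_injective).symm
  have hline (y : unitInterval) : ComponentsMeet (Xseq u α)
      (Subtype.val ⁻¹' closure (stoneCechUnit '' {p : bS | p.2.2 = y})) :=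
    hXseq ▸ componentsMeet_levelDerived hFsp hf (isClosed_closure.preimage continuous_subtype_val)
      (isPreconnected_preimage_Ioo u hP) (preimage_Ioo_inter_line_nonempty u y) α
  exact ⟨hline 0 x hx, hline 1 x hx⟩

/-- For every ordinal `α`, every connected component of `X_α` meets both the bottom
line `B_u` and the top line `T_u`. -/
theorem components_meet_bottom_top (u : StoneCech ℕ)
    (hu : ∀ n : ℕ, u ≠ stoneCechUnit n)
    (hne : (Su u).Nonempty) (hcomp : IsCompact (Su u)) (hconn : IsConnected (Su u))
    (hFsp : IsFSpace (Su u))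
    (hP : ∀ s r : unitInterval, s < r → IsConnected (Pset u s r)) :
    ∀ α : Ordinal, ∀ x ∈ Xseq u α,
      (connectedComponentIn (Xseq u α) x ∩ Bu u).Nonempty ∧
      (connectedComponentIn (Xseq u α) x ∩ Tu u).Nonempty :=
  components_meet_bottom_top_general u hFsp hP

end
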